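/- Let A ∈ ℂ^{n×n×n3} with ind(A) = k, and let Y ∈ ℂ^{n×n×n3} be any tensor satisfying A^{2k+1} *_c Y *_c A^{2k+1} = A^{2k+1} (a {1}-inverse of A^{2k+1}). Then the Drazin inverse of A is A^D = A^k *_c Y *_c A^k. In particular, A^D = A^k *_c (A^{2k+1})^† *_c A^k, where (A^{2k+1})^† is the Moore-Penrose inverse of A^{2k+1}. -/

import Mathlib

noncomputable section

/-- A third-order tensor: a family of frontal slices. -/
abbrev Tensor (n1 n2 n3 : ℕ) : Type := Fin n3 → Matrix (Fin n1) (Fin n2) ℂ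

namespace Tensor

/-- The block Toeplitz-plus-Hankel matrix `mat(A)` associated to a tensor. -/
def matT {n1 n2 n3 : ℕ} (A : Tensor n1 n2 n3) :
    Matrix (Fin n3 × Fin n1) (Fin n3 × Fin n2) ℂ := fun p q =>
  A ⟨p.1.1 - q.1.1 + (q.1.1 - p.1.1), by
        have h1 := p.1.isLt; have h2 := q.1.isLt; omega⟩ p.2 q.2 +
    (if h : p.1.1 + q.1.1 + 2 ≤ n3 then A ⟨p.1.1 + q.1.1 + 1, by omega⟩ p.2 q.2
     else if h2 : n3 ≤ p.1.1 + q.1.1 then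
       A ⟨2 * n3 - (p.1.1 + q.1.1) - 1, by have h1 := p.1.isLt; omega⟩ p.2 q.2
     else 0)

/-- `ten`, the inverse of `mat` on its range: the slices of a tensor are recovered
from the first block-column of its `mat` by an alternating sum. -/
def tenT {n1 n2 n3 : ℕ} (M : Matrix (Fin n3 × Fin n1) (Fin n3 × Fin n2) ℂ) :
    Tensor n1 n2 n3 := fun i => Matrix.of fun a b =>
  ∑ t : Fin n3, if i.1 ≤ t.1 then (-1 : ℂ) ^ (t.1 - i.1) * M (t, a) (⟨0, i.pos⟩, b) else 0

/-- The C-product of two tensors: the unique tensor whose `mat` is `mat(A) * mat(B)`. -/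
def cmul {n1 n2 l n3 : ℕ} (A : Tensor n1 n2 n3) (B : Tensor n2 l n3) : Tensor n1 l n3 :=
  tenT (matT A * matT B)

/-- The conjugate transpose of a tensor, taken slice-wise. -/
def conjT {n1 n2 n3 : ℕ} (A : Tensor n1 n2 n3) : Tensor n2 n1 n3 := fun i => (A i).conjTranspose

/-- The identity tensor: the tensor whose `mat` is the identity matrix. -/
def idT {n n3 : ℕ} : Tensor n n n3 := fun i => if i.1 = 0 then 1 else 0

/-- A tensor is unitary if `Qᴴ *c Q = Q *c Qᴴ = I`. -/
def Unitary {n n3 : ℕ} (Q : Tensor n n n3) : Prop :=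
  cmul (conjT Q) Q = idT ∧ cmul Q (conjT Q) = idT

/-- `X` is the inverse of the square tensor `B` under the C-product. -/
def IsInverse {n n3 : ℕ} (B X : Tensor n n n3) : Prop :=
  cmul B X = idT ∧ cmul X B = idT

/-- `X` is the Moore-Penrose inverse of `A` under the C-product. -/
def IsMP {n1 n2 n3 : ℕ} (A : Tensor n1 n2 n3) (X : Tensor n2 n1 n3) : Prop :=
  cmul (cmul A X) A = A ∧ cmul (cmul X A) X = X ∧
    conjT (cmul A X) = cmul A X ∧ conjT (cmul X A) = cmul X A

/-- Powers of a square tensor with respect to the C-product. -/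
def cpow {n n3 : ℕ} (A : Tensor n n n3) : ℕ → Tensor n n n3
  | 0 => idT
  | m + 1 => cmul (cpow A m) A

/-- `ind(A) = k`: `k` is the smallest nonnegative integer with
`rank(mat(A)^k) = rank(mat(A)^(k+1))`. -/
def IsIndex {n n3 : ℕ} (A : Tensor n n n3) (k : ℕ) : Prop :=
  (matT A ^ k).rank = (matT A ^ (k + 1)).rank ∧
    ∀ j < k, (matT A ^ j).rank ≠ (matT A ^ (j + 1)).rank

/-- `X` is the Drazin inverse of `A` (of index `k`) under the C-product. -/
def IsDrazin {n n3 : ℕ} (A : Tensor n n n3) (k : ℕ) (X : Tensor n n n3) : Prop :=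
  cmul (cpow A (k + 1)) X = cpow A k ∧ cmul (cmul X A) X = X ∧ cmul A X = cmul X A

/-- `X` is an inverse of `A` along `G` under the C-product. -/
def IsInvAlong {n1 n2 n3 : ℕ} (A : Tensor n1 n2 n3) (G X : Tensor n2 n1 n3) : Prop :=
  cmul (cmul X A) G = G ∧ cmul (cmul G A) X = G ∧
    (∃ U : Tensor n1 n1 n3, X = cmul G U) ∧
    (∃ V : Tensor n2 n2 n3, conjT X = cmul (conjT G) V)

/-- All frontal slices are diagonal. -/
def FDiag {n1 n2 n3 : ℕ} (A : Tensor n1 n2 n3) : Prop :=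
  ∀ (i : Fin n3) (a : Fin n1) (b : Fin n2), (a : ℕ) ≠ (b : ℕ) → A i a b = 0

/-- All frontal slices are upper triangular. -/
def FUpper {n1 n2 n3 : ℕ} (A : Tensor n1 n2 n3) : Prop :=
  ∀ (i : Fin n3) (a : Fin n1) (b : Fin n2), (b : ℕ) < (a : ℕ) → A i a b = 0

/-- All frontal slices are lower triangular. -/
def FLower {n1 n2 n3 : ℕ} (A : Tensor n1 n2 n3) : Prop :=
  ∀ (i : Fin n3) (a : Fin n1) (b : Fin n2), (a : ℕ) < (b : ℕ) → A i a b = 0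

/-- Slice-wise 2×2 block tensor `[[A, B],[C, D]]`. -/
def blockT {r s t u n3 : ℕ} (A : Tensor r t n3) (B : Tensor r u n3)
    (C : Tensor s t n3) (D : Tensor s u n3) : Tensor (r + s) (t + u) n3 := fun i =>
  Matrix.reindex finSumFinEquiv finSumFinEquiv (Matrix.fromBlocks (A i) (B i) (C i) (D i))

/-- The mode-3 product of a tensor with an `n3 × n3` matrix. -/
def mode3 {n1 n2 n3 : ℕ} (A : Tensor n1 n2 n3) (M : Matrix (Fin n3) (Fin n3) ℂ) :
    Tensor n1 n2 n3 := fun l => ∑ i, M l i • A i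

end Tensor

open Tensor

/-! `matT` is an injective multiplicative map from tensors under the C-product to square
matrices. Extend the slices of `A` to an even function `c` on `ℤ/2n₃` vanishing at `n₃`; then the
`(i, j)` block of `mat(A)` is `c (i - j) + c (i + j + 1)`. Block matrices of this shape multiply
by cyclic convolution of their (even) symbols, and `ten` recovers a symbol up to a multiple of
`m ↦ (-1) ^ |m|`, whose block matrix vanishes.

So the theorem is about `M = mat(A)` with `rank M^k = rank M^(k+1)`. Then
`M^k = M^(k+1) Z = Z' M^(k+1)`, and iterating, `M^k = M^(2k+1) Z^(k+1) = Z'^(k+1) M^(2k+1)`.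
Any inner inverse `N` of `M^(2k+1)` therefore satisfies `M^(2k+1) N M^k = M^k = M^k N M^(2k+1)`,
and these two identities alone make `M^k N M^k` a Drazin inverse of `M`. The Moore–Penrose
inverse is in particular an inner inverse. -/

lemma neg_one_pow_add_neg_one_pow_of_odd {R : Type*} [Ring R] {a b : ℕ} (h : Odd (a + b)) :
    (-1 : R) ^ a + (-1) ^ b = 0 := by
  rcases Nat.even_or_odd a with ha | ha
  · rw [ha.neg_one_pow, ((Nat.odd_add'.1 h).2 ha).neg_one_pow, add_neg_cancel]
  · rw [ha.neg_one_pow, ((Nat.odd_add.1 h).1 ha).neg_one_pow, neg_add_cancel]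

lemma sum_range_alternating_telescope {R : Type*} [CommRing R] (g : ℕ → R) {i N : ℕ}
    (hi : i ≤ N) :
    ∑ t ∈ Finset.range N, (if i ≤ t then (-1) ^ (t - i) * (g t + g (t + 1)) else 0)
      = g i - (-1) ^ (N - i) * g N := by
  obtain ⟨r, rfl⟩ := Nat.exists_eq_add_of_le hi
  rw [Finset.sum_range_add, Finset.sum_eq_zero fun t ht => if_neg (by simpa using ht), zero_add]
  simp only [Nat.le_add_right, if_true, Nat.add_sub_cancel_left]
  have := Finset.sum_range_sub' (fun u => (-1 : R) ^ u * g (i + u)) r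
  simp only [pow_zero, one_mul, add_zero] at this
  rw [← this]
  refine Finset.sum_congr rfl fun u _ => ?_
  rw [pow_succ, ← add_assoc]
  ring

section Convolution

variable {G : Type*} [AddCommGroup G] [Fintype G] {R : Type*} [Semiring R] {m n p : Type*}
  [Fintype n]

def cyclicConv (c : G → Matrix m n R) (d : G → Matrix n p R) (z : G) : Matrix m p R :=
  ∑ y, c y * d (z - y)

lemma cyclicConv_neg {c : G → Matrix m n R} {d : G → Matrix n p R} (hc : ∀ z, c (-z) = c z)
    (hd : ∀ z, d (-z) = d z) (z : G) : cyclicConv c d (-z) = cyclicConv c d z := by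
  unfold cyclicConv
  rw [← Equiv.sum_comp (Equiv.neg G)]
  refine Finset.sum_congr rfl fun y _ => ?_
  rw [Equiv.neg_apply, hc, ← hd, neg_sub_neg, neg_sub]

end Convolution

section Drazin

variable {M : Type*} [Monoid M]

def IsDrazinInv (a x : M) (k : ℕ) : Prop :=
  a ^ (k + 1) * x = a ^ k ∧ x * a * x = x ∧ a * x = x * a

lemma pow_eq_pow_mul_pow_mul_pow {a z : M} {k : ℕ} (h : a ^ k = a * a ^ k * z) (j : ℕ) :
    a ^ k = a ^ j * a ^ k * z ^ j := by
  induction j with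
  | zero => simp
  | succ j ih =>
    calc a ^ k = a ^ j * (a * a ^ k * z) * z ^ j := by rw [← h]; exact ih
      _ = a ^ (j + 1) * a ^ k * z ^ (j + 1) := by
        rw [pow_succ a j, pow_succ' z j]
        simp only [mul_assoc]

lemma pow_eq_pow_mul_pow_mul_pow' {a z : M} {k : ℕ} (h : a ^ k = z * a ^ k * a) (j : ℕ) :
    a ^ k = z ^ j * a ^ k * a ^ j := by
  induction j with
  | zero => simp
  | succ j ih =>
    calc a ^ k = z ^ j * (z * a ^ k * a) * a ^ j := by rw [← h]; exact ih
      _ = z ^ (j + 1) * a ^ k * a ^ (j + 1) := by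
        rw [pow_succ z j, pow_succ' a j]
        simp only [mul_assoc]

lemma isDrazinInv_of_pow_mul_mul_pow_eq {a n : M} {k : ℕ}
    (h₁ : a ^ (2 * k + 1) * n * a ^ k = a ^ k) (h₂ : a ^ k * n * a ^ (2 * k + 1) = a ^ k) :
    IsDrazinInv a (a ^ k * n * a ^ k) k := by
  set K := a ^ k with hK
  set X := K * n * K
  have hKa : K * a = a ^ (k + 1) := (pow_succ a k).symm
  have haK : a * K = a ^ (k + 1) := (pow_succ' a k).symm
  have hpow : a ^ (k + 1) * K = a ^ (2 * k + 1) := by rw [hK, ← pow_add]; congr 1; omega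
  have hpow' : K * a ^ (k + 1) = a ^ (2 * k + 1) := by rw [hK, ← pow_add]; congr 1; omega
  have hl : a ^ (k + 1) * X = K := by
    rw [← h₁, ← hpow]
    simp only [X, mul_assoc]
  have hr : X * a ^ (k + 1) = K := by
    rw [← h₂, ← hpow']
    simp only [X, mul_assoc]
  -- `a X K = K = K X a` lets `X = K n K` absorb `a` on either side: both `a X` and `X a`
  -- equal `a X X a`.
  have haXK : a * X * K = K :=
    calc a * X * K = a * (X * a ^ (k + 1)) * X := by rw [← hl]; simp only [mul_assoc]
      _ = K := by rw [hr, haK, hl]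
  have hKXa : K * X * a = K :=
    calc K * X * a = X * (a ^ (k + 1) * X) * a := by rw [← hr]; simp only [mul_assoc]
      _ = K := by rw [hl, mul_assoc, hKa, hr]
  refine ⟨hl, ?_, ?_⟩
  · calc X * a * X = K * n * (a ^ (k + 1) * K) * n * K := by
          simp only [X, ← hKa, mul_assoc]
      _ = X := by rw [hpow, h₂]
  · calc a * X = a * (K * n * (K * X * a)) := by rw [hKXa]
      _ = a * X * X * a := by simp only [X, mul_assoc]
      _ = (a * X * K) * n * K * a := by simp only [X, mul_assoc]
      _ = X * a := by rw [haXK]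

lemma isDrazinInv_pow_mul_mul_pow {a n z z' : M} {k : ℕ} (hz : a ^ k = a ^ (k + 1) * z)
    (hz' : a ^ k = z' * a ^ (k + 1))
    (hn : a ^ (2 * k + 1) * n * a ^ (2 * k + 1) = a ^ (2 * k + 1)) :
    IsDrazinInv a (a ^ k * n * a ^ k) k := by
  have hpow : a ^ (k + 1) * a ^ k = a ^ (2 * k + 1) := by rw [← pow_add]; congr 1; omega
  have hpow' : a ^ k * a ^ (k + 1) = a ^ (2 * k + 1) := by rw [← pow_add]; congr 1; omega
  have hr : a ^ k = a ^ (2 * k + 1) * z ^ (k + 1) := by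
    rw [← hpow]
    exact pow_eq_pow_mul_pow_mul_pow (by rwa [← pow_succ']) (k + 1)
  have hl : a ^ k = z' ^ (k + 1) * a ^ (2 * k + 1) := by
    rw [← hpow', ← mul_assoc]
    exact pow_eq_pow_mul_pow_mul_pow' (by rwa [mul_assoc, ← pow_succ]) (k + 1)
  refine isDrazinInv_of_pow_mul_mul_pow_eq ?_ ?_
  · calc a ^ (2 * k + 1) * n * a ^ k
        = a ^ (2 * k + 1) * n * a ^ (2 * k + 1) * z ^ (k + 1) := by
          conv_lhs => rw [hr]
          simp only [mul_assoc]
      _ = a ^ k := by rw [hn, ← hr]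
  · calc a ^ k * n * a ^ (2 * k + 1)
        = z' ^ (k + 1) * (a ^ (2 * k + 1) * n * a ^ (2 * k + 1)) := by
          conv_lhs => rw [hl]
          simp only [mul_assoc]
      _ = a ^ k := by rw [hn, ← hl]

end Drazin

namespace Matrix

variable {K : Type*} [Field K] {ι : Type*} [Fintype ι] [DecidableEq ι]

lemma exists_eq_mul_of_range_mulVecLin_le {R : Type*} [CommSemiring R] {m n p : Type*}
    [Fintype n] [Fintype p] [DecidableEq p] {A : Matrix m n R} {B : Matrix m p R}
    (h : LinearMap.range B.mulVecLin ≤ LinearMap.range A.mulVecLin) :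
    ∃ Z : Matrix n p R, B = A * Z := by
  choose y hy using fun j => h (LinearMap.mem_range_self B.mulVecLin (Pi.single j 1))
  refine ⟨Matrix.of fun i j => y j i, ?_⟩
  ext i j
  have := congrFun (hy j) i
  simp only [mulVecLin_apply, mulVec_single_one, col_apply] at this
  rw [← this]
  rfl

lemma range_mulVecLin_pow_succ {M : Matrix ι ι K} {k : ℕ}
    (h : (M ^ k).rank = (M ^ (k + 1)).rank) :
    LinearMap.range (M ^ (k + 1)).mulVecLin = LinearMap.range (M ^ k).mulVecLin := by
  refine Submodule.eq_of_le_of_finrank_eq ?_ h.symm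
  rw [pow_succ, mulVecLin_mul]
  exact LinearMap.range_comp_le_range _ _

lemma exists_pow_eq_pow_succ_mul {M : Matrix ι ι K} {k : ℕ}
    (h : (M ^ k).rank = (M ^ (k + 1)).rank) : ∃ Z, M ^ k = M ^ (k + 1) * Z :=
  exists_eq_mul_of_range_mulVecLin_le (range_mulVecLin_pow_succ h).ge

lemma exists_pow_eq_mul_pow_succ {M : Matrix ι ι K} {k : ℕ}
    (h : (M ^ k).rank = (M ^ (k + 1)).rank) : ∃ Z, M ^ k = Z * M ^ (k + 1) := by
  obtain ⟨Z, hZ⟩ := exists_pow_eq_pow_succ_mul (M := Mᵀ) (k := k)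
    (by rw [← transpose_pow, ← transpose_pow, rank_transpose, rank_transpose, h])
  refine ⟨Zᵀ, ?_⟩
  rw [← transpose_pow, ← transpose_pow] at hZ
  simpa using congrArg transpose hZ

lemma isDrazinInv_pow_mul_mul_pow_of_rank_eq {M N : Matrix ι ι K} {k : ℕ}
    (h : (M ^ k).rank = (M ^ (k + 1)).rank)
    (hN : M ^ (2 * k + 1) * N * M ^ (2 * k + 1) = M ^ (2 * k + 1)) :
    IsDrazinInv M (M ^ k * N * M ^ k) k := by
  obtain ⟨Z, hZ⟩ := exists_pow_eq_pow_succ_mul h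
  obtain ⟨Z', hZ'⟩ := exists_pow_eq_mul_pow_succ h
  exact isDrazinInv_pow_mul_mul_pow hZ hZ' hN

end Matrix

namespace ZMod

variable {n : ℕ}

lemma natAbs_valMinAbs_two_mul_le [NeZero n] (m : ZMod (2 * n)) : m.valMinAbs.natAbs ≤ n := by
  simpa using natAbs_valMinAbs_le m

lemma natAbs_valMinAbs_natCast_of_lt {N x : ℕ} (hx : x < N) :
    (x : ZMod N).valMinAbs.natAbs = min x (N - x) := by
  have : NeZero N := ⟨by omega⟩
  rw [valMinAbs_natAbs_eq_min, val_natCast_of_lt hx]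

lemma natAbs_valMinAbs_natCast_sub_natCast {i j : ℕ} (hi : i < n) (hj : j < n) :
    ((i : ZMod (2 * n)) - j).valMinAbs.natAbs = i - j + (j - i) := by
  rcases le_total j i with h | h
  · rw [← Nat.cast_sub h, natAbs_valMinAbs_natCast_of_lt (by omega)]
    omega
  · rw [← neg_sub, ← Nat.cast_sub h, natAbs_valMinAbs_neg,
      natAbs_valMinAbs_natCast_of_lt (by omega)]
    omega

lemma natAbs_valMinAbs_natCast_add_natCast_add_one {i j : ℕ} (hi : i < n) (hj : j < n) :
    ((i : ZMod (2 * n)) + j + 1).valMinAbs.natAbs = min (i + j + 1) (2 * n - (i + j + 1)) := by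
  rw [← Nat.cast_add, ← Nat.cast_add_one, natAbs_valMinAbs_natCast_of_lt (by omega)]

lemma apply_natCast_natAbs_valMinAbs [NeZero n] {M : Type*} {c : ZMod (2 * n) → M}
    (hc : ∀ m, c (-m) = c m) (m : ZMod (2 * n)) :
    c (m.valMinAbs.natAbs : ZMod (2 * n)) = c m := by
  rw [natCast_natAbs_valMinAbs]
  split_ifs
  · rfl
  · exact hc m

lemma sum_two_mul [NeZero n] {M : Type*} [AddCommMonoid M] (f : ZMod (2 * n) → M) :
    ∑ m, f m = ∑ s : Fin n, (f s + f (-1 - s)) := by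
  have hrange : ∑ x ∈ Finset.range (2 * n), f x = ∑ m, f m :=
    Finset.sum_nbij' (fun x => (x : ZMod (2 * n))) val (by simp)
      (fun m _ => by simpa using val_lt m)
      (fun x hx => val_natCast_of_lt (Finset.mem_range.1 hx))
      (fun m _ => natCast_zmod_val m) (fun _ _ => rfl)
  have hreflect : ∀ s < n, ((n + (n - 1 - s) : ℕ) : ZMod (2 * n)) = -1 - s := by
    intro s hs
    have h := congrArg (Nat.cast : ℕ → ZMod (2 * n))
      (show n + (n - 1 - s) + 1 + s = 2 * n by omega)
    rw [natCast_self, Nat.cast_add, Nat.cast_add, Nat.cast_one] at h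
    linear_combination h
  rw [← hrange, show Finset.range (2 * n) = Finset.range (n + n) by rw [two_mul],
    Finset.sum_range_add, ← Finset.sum_range_reflect (fun x => f (n + x : ℕ)),
    Fin.sum_univ_eq_sum_range (fun s => f s + f (-1 - s)), Finset.sum_add_distrib]
  congr 1
  exact Finset.sum_congr rfl fun s hs => by rw [hreflect s (Finset.mem_range.1 hs)]

end ZMod

namespace Tensor

variable {n n1 n2 l n3 : ℕ}

/-- `m.valMinAbs.natAbs ∈ [0, n3]` is the distance from `m` to `0`, so this is the even
extension of `i ↦ A i` to `ℤ/2n₃`, with value `0` at `n₃`. -/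
def evenExt (A : Tensor n1 n2 n3) (m : ZMod (2 * n3)) : Matrix (Fin n1) (Fin n2) ℂ :=
  if h : m.valMinAbs.natAbs < n3 then A ⟨_, h⟩ else 0

lemma evenExt_neg (A : Tensor n1 n2 n3) (m : ZMod (2 * n3)) : evenExt A (-m) = evenExt A m := by
  simp only [evenExt, ZMod.natAbs_valMinAbs_neg]

lemma evenExt_of_natAbs_valMinAbs_eq (A : Tensor n1 n2 n3) {m : ZMod (2 * n3)} {x : ℕ}
    (hm : m.valMinAbs.natAbs = x) (hx : x < n3) : evenExt A m = A ⟨x, hx⟩ := by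
  subst hm
  exact dif_pos hx

lemma evenExt_of_natAbs_valMinAbs_eq_self (A : Tensor n1 n2 n3) {m : ZMod (2 * n3)}
    (hm : m.valMinAbs.natAbs = n3) : evenExt A m = 0 :=
  dif_neg hm.not_lt

lemma evenExt_natCast (A : Tensor n1 n2 n3) (i : Fin n3) :
    evenExt A ((i : ℕ) : ZMod (2 * n3)) = A i :=
  evenExt_of_natAbs_valMinAbs_eq A
    ((ZMod.natAbs_valMinAbs_natCast_of_lt (by omega)).trans (by omega)) i.isLt

lemma evenExt_natCast_self [NeZero n3] (A : Tensor n1 n2 n3) :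
    evenExt A (n3 : ZMod (2 * n3)) = 0 :=
  evenExt_of_natAbs_valMinAbs_eq_self A
    ((ZMod.natAbs_valMinAbs_natCast_of_lt (by have := NeZero.pos n3; omega)).trans (by omega))

def toeplitzHankel (c : ZMod (2 * n3) → Matrix (Fin n1) (Fin n2) ℂ) :
    Matrix (Fin n3 × Fin n1) (Fin n3 × Fin n2) ℂ := fun p q =>
  (c ((p.1 : ℕ) - (q.1 : ℕ)) + c ((p.1 : ℕ) + (q.1 : ℕ) + 1)) p.2 q.2

lemma matT_eq_toeplitzHankel [NeZero n3] (A : Tensor n1 n2 n3) :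
    matT A = toeplitzHankel (evenExt A) := by
  ext ⟨i, a⟩ ⟨j, b⟩
  have hi := i.isLt
  have hj := j.isLt
  have hH := ZMod.natAbs_valMinAbs_natCast_add_natCast_add_one hi hj
  simp only [matT, toeplitzHankel, Matrix.add_apply]
  rw [evenExt_of_natAbs_valMinAbs_eq A (ZMod.natAbs_valMinAbs_natCast_sub_natCast hi hj)
    (by omega)]
  congr 1
  rcases lt_trichotomy ((i : ℕ) + j + 1) n3 with h | h | h
  · rw [dif_pos (by omega), evenExt_of_natAbs_valMinAbs_eq A (hH.trans (by omega)) h]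
  · rw [dif_neg (by omega), dif_neg (by omega),
      evenExt_of_natAbs_valMinAbs_eq_self A (hH.trans (by omega))]
    rfl
  · rw [dif_neg (by omega), dif_pos (by omega),
      evenExt_of_natAbs_valMinAbs_eq A (x := 2 * n3 - (i + j) - 1) (hH.trans (by omega))]

lemma cyclicConv_eq_sum_fin [NeZero n3] (c : ZMod (2 * n3) → Matrix (Fin n1) (Fin n2) ℂ)
    {d : ZMod (2 * n3) → Matrix (Fin n2) (Fin l) ℂ} (hd : ∀ m, d (-m) = d m)
    (x z : ZMod (2 * n3)) :
    cyclicConv c d z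
      = ∑ s : Fin n3, (c (x - s) * d (z - x + s) + c (x + s + 1) * d (x - z + s + 1)) := by
  unfold cyclicConv
  rw [← Equiv.sum_comp (Equiv.subLeft x), ZMod.sum_two_mul]
  refine Finset.sum_congr rfl fun s _ => ?_
  simp only [Equiv.subLeft_apply]
  rw [← hd (z - (x - (-1 - s)))]
  congr 3 <;> ring

lemma toeplitzHankel_mul [NeZero n3] (c : ZMod (2 * n3) → Matrix (Fin n1) (Fin n2) ℂ)
    {d : ZMod (2 * n3) → Matrix (Fin n2) (Fin l) ℂ} (hd : ∀ m, d (-m) = d m) :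
    toeplitzHankel c * toeplitzHankel d = toeplitzHankel (cyclicConv c d) := by
  ext ⟨i, a⟩ ⟨j, b⟩
  have hsum : ∀ x y : ZMod (2 * n3), cyclicConv c d (x - y) + cyclicConv c d (x + y + 1)
      = ∑ s : Fin n3, (c (x - s) + c (x + s + 1)) * (d (s - y) + d (s + y + 1)) := by
    intro x y
    rw [cyclicConv_eq_sum_fin c hd x, cyclicConv_eq_sum_fin c hd x, ← Finset.sum_add_distrib]
    refine Finset.sum_congr rfl fun s _ => ?_
    rw [show x - y - x + s = s - y by ring, show x - (x - y) + s + 1 = s + y + 1 by ring,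
      show x + y + 1 - x + s = s + y + 1 by ring, show x - (x + y + 1) + s + 1 = s - y by ring,
      Matrix.add_mul, Matrix.mul_add, Matrix.mul_add]
    abel
  simp only [toeplitzHankel, Matrix.mul_apply, Fintype.sum_prod_type]
  rw [hsum, Matrix.sum_apply]
  rfl

lemma tenT_toeplitzHankel [NeZero n3] (c : ZMod (2 * n3) → Matrix (Fin n1) (Fin n2) ℂ)
    (i : Fin n3) : tenT (toeplitzHankel c) i = c (i : ℕ) - (-1 : ℂ) ^ (n3 - i) • c n3 := by
  ext a b
  have hcol : ∀ t : Fin n3, toeplitzHankel c (t, a) (⟨0, i.pos⟩, b)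
      = c (t : ℕ) a b + c ((t + 1 : ℕ) : ZMod (2 * n3)) a b := by
    intro t
    simp [toeplitzHankel]
  simp only [tenT, Matrix.of_apply, hcol, Matrix.sub_apply, Matrix.smul_apply, smul_eq_mul]
  exact (Fin.sum_univ_eq_sum_range (fun t => if (i : ℕ) ≤ t then
      (-1 : ℂ) ^ (t - i) * (c (t : ZMod (2 * n3)) a b + c ((t + 1 : ℕ) : ZMod (2 * n3)) a b)
      else 0) n3).trans
    (sum_range_alternating_telescope (fun u => c (u : ZMod (2 * n3)) a b) i.isLt.le)

lemma toeplitzHankel_sub (c d : ZMod (2 * n3) → Matrix (Fin n1) (Fin n2) ℂ) :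
    toeplitzHankel (fun m => c m - d m) = toeplitzHankel c - toeplitzHankel d := by
  ext p q
  simp only [toeplitzHankel, Matrix.sub_apply, Matrix.add_apply]
  abel

/-- The Toeplitz and Hankel parts cancel: `|i - j|` and `|i + j + 1|` have opposite parities. -/
lemma toeplitzHankel_alternating [NeZero n3] (C : Matrix (Fin n1) (Fin n2) ℂ) :
    toeplitzHankel (fun m : ZMod (2 * n3) => (-1 : ℂ) ^ (n3 - m.valMinAbs.natAbs) • C) = 0 := by
  ext ⟨i, a⟩ ⟨j, b⟩
  simp only [toeplitzHankel, ZMod.natAbs_valMinAbs_natCast_sub_natCast i.isLt j.isLt,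
    ZMod.natAbs_valMinAbs_natCast_add_natCast_add_one i.isLt j.isLt, ← add_smul]
  rw [neg_one_pow_add_neg_one_pow_of_odd (Nat.odd_iff.2 (by omega)), zero_smul]
  rfl

lemma evenExt_tenT_toeplitzHankel [NeZero n3] {c : ZMod (2 * n3) → Matrix (Fin n1) (Fin n2) ℂ}
    (hc : ∀ m, c (-m) = c m) (m : ZMod (2 * n3)) :
    evenExt (tenT (toeplitzHankel c)) m
      = c m - (-1 : ℂ) ^ (n3 - m.valMinAbs.natAbs) • c n3 := by
  rcases (ZMod.natAbs_valMinAbs_two_mul_le m).lt_or_eq with h | h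
  · rw [evenExt_of_natAbs_valMinAbs_eq _ rfl h, tenT_toeplitzHankel,
      ZMod.apply_natCast_natAbs_valMinAbs hc]
  · rw [evenExt_of_natAbs_valMinAbs_eq_self _ h, ← ZMod.apply_natCast_natAbs_valMinAbs hc m, h,
      Nat.sub_self, pow_zero, one_smul, sub_self]

lemma matT_tenT_toeplitzHankel [NeZero n3] {c : ZMod (2 * n3) → Matrix (Fin n1) (Fin n2) ℂ}
    (hc : ∀ m, c (-m) = c m) : matT (tenT (toeplitzHankel c)) = toeplitzHankel c := by
  rw [matT_eq_toeplitzHankel, funext (evenExt_tenT_toeplitzHankel hc), toeplitzHankel_sub,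
    toeplitzHankel_alternating, sub_zero]

lemma tenT_matT [NeZero n3] (A : Tensor n1 n2 n3) : tenT (matT A) = A := by
  funext i
  rw [matT_eq_toeplitzHankel, tenT_toeplitzHankel, evenExt_natCast, evenExt_natCast_self,
    smul_zero, sub_zero]

lemma matT_injective : Function.Injective (matT : Tensor n1 n2 n3 → _) := by
  rcases eq_zero_or_neZero n3 with rfl | _
  · exact fun A B _ => Subsingleton.elim A B
  · exact Function.LeftInverse.injective tenT_matT

lemma matT_cmul (A : Tensor n1 n2 n3) (B : Tensor n2 l n3) :
    matT (cmul A B) = matT A * matT B := by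
  rcases eq_zero_or_neZero n3 with rfl | _
  · ext ⟨i, _⟩
    exact i.elim0
  · rw [cmul, matT_eq_toeplitzHankel A, matT_eq_toeplitzHankel B,
      toeplitzHankel_mul _ (evenExt_neg B),
      matT_tenT_toeplitzHankel (cyclicConv_neg (evenExt_neg A) (evenExt_neg B))]

lemma matT_idT : matT (idT : Tensor n n n3) = 1 := by
  rcases eq_zero_or_neZero n3 with rfl | _
  · ext ⟨i, _⟩
    exact i.elim0
  ext ⟨i, a⟩ ⟨j, b⟩
  have hi := i.isLt
  have hj := j.isLt
  have hHankel : evenExt (idT : Tensor n n n3) ((i : ℕ) + (j : ℕ) + 1) = 0 := by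
    have hH := ZMod.natAbs_valMinAbs_natCast_add_natCast_add_one (n := n3) hi hj
    by_cases h : min ((i : ℕ) + j + 1) (2 * n3 - (i + j + 1)) < n3
    · rw [evenExt_of_natAbs_valMinAbs_eq _ hH h]
      exact if_neg (show min ((i : ℕ) + j + 1) (2 * n3 - (i + j + 1)) ≠ 0 by omega)
    · exact evenExt_of_natAbs_valMinAbs_eq_self _ (hH.trans (by omega))
  simp only [matT_eq_toeplitzHankel, toeplitzHankel, hHankel, add_zero,
    evenExt_of_natAbs_valMinAbs_eq _ (ZMod.natAbs_valMinAbs_natCast_sub_natCast hi hj)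
      (by omega : _ < n3)]
  by_cases hij : (i : ℕ) = j
  · simp [idT, Matrix.one_apply, hij, Fin.ext_iff]
  · have hdist : (i : ℕ) - j + (j - i) ≠ 0 := by omega
    simp only [idT, if_neg hdist, Matrix.one_apply, Prod.mk.injEq, Fin.ext_iff, hij, false_and,
      if_false, Matrix.zero_apply]

lemma matT_cpow (A : Tensor n n n3) (m : ℕ) : matT (cpow A m) = matT A ^ m := by
  induction m with
  | zero => exact matT_idT
  | succ m ih => rw [cpow, matT_cmul, ih, pow_succ]

lemma isDrazin_iff (A : Tensor n n n3) (k : ℕ) (X : Tensor n n n3) :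
    IsDrazin A k X ↔ IsDrazinInv (matT A) (matT X) k := by
  simp only [IsDrazin, IsDrazinInv, ← matT_injective.eq_iff, matT_cmul, matT_cpow]

lemma isDrazin_pow_cmul_cmul_pow {A : Tensor n n n3} {k : ℕ}
    (hk : (matT A ^ k).rank = (matT A ^ (k + 1)).rank) {W : Tensor n n n3}
    (hW : cmul (cmul (cpow A (2 * k + 1)) W) (cpow A (2 * k + 1)) = cpow A (2 * k + 1)) :
    IsDrazin A k (cmul (cmul (cpow A k) W) (cpow A k)) := by
  rw [isDrazin_iff, matT_cmul, matT_cmul, matT_cpow]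
  refine Matrix.isDrazinInv_pow_mul_mul_pow_of_rank_eq hk ?_
  simpa only [matT_cmul, matT_cpow] using congrArg matT hW

end Tensor

theorem stmt12 {n n3 : ℕ} (A : Tensor n n n3) (k : ℕ) (hk : IsIndex A k)
    (Y : Tensor n n n3)
    (hY : cmul (cmul (cpow A (2 * k + 1)) Y) (cpow A (2 * k + 1)) = cpow A (2 * k + 1)) :
    IsDrazin A k (cmul (cmul (cpow A k) Y) (cpow A k)) ∧
      ∀ P : Tensor n n n3, IsMP (cpow A (2 * k + 1)) P →
        IsDrazin A k (cmul (cmul (cpow A k) P) (cpow A k)) :=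
  ⟨isDrazin_pow_cmul_cmul_pow hk.1 hY, fun _ hP => isDrazin_pow_cmul_cmul_pow hk.1 hP.1⟩
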